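/- For integers d ≥ 2 and N ≥ 1, the function x ↦ E[(X_d − x·X_N/N)_+] / E[(X_2 − x)_+] is nondecreasing on [d, ∞), where X_d, X_N, X_2 are chi-squared random variables with d, N, 2 degrees of freedom respectively, with X_d and X_N independent. -/

import Mathlib

open MeasureTheory ProbabilityTheory Real

/-- The chi-squared distribution with `k` degrees of freedom, as the
Gamma distribution with shape `k/2` and rate `1/2`. -/
noncomputable def chiSqMeasure (k : ℕ) : Measure ℝ :=
  gammaMeasure ((k : ℝ) / 2) (1 / 2)

/-!
Let `S t = E[(X_d - t)_+]` and `T t = P(X_d > t)`, so that `S' = -T`. With `V = X_N / N`, the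
numerator is `M x = E[S (x V)]` and the denominator is `2 e^{-x/2}`, so the ratio is
`e^{x/2} M x / 2` and it suffices that `M x / 2 ≥ -M' x = E[T (x V) V]`.

For shape `≥ 1` the gamma density satisfies `f (w + s) ≥ e^{-s/2} f w`, hence
`T (t + s) ≥ e^{-s/2} T t` and `S t = ∫₀^∞ T (t + s) ds ≥ 2 T t`. For `x ≥ 0`, `T (x V)` and `V`
are oppositely ordered, so Chebyshev's integral inequality and `E[V] = 1` give
`E[T (x V) V] ≤ E[T (x V)] ≤ E[S (x V)] / 2`.
-/

open Set Filter
open scoped NNReal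

theorem integral_mul_le_integral_mul_integral_of_antivary {α : Type*} [MeasurableSpace α]
    {μ : Measure α} [IsProbabilityMeasure μ] {f g : α → ℝ} (hfg : Antivary f g)
    (hf : Integrable f μ) (hg : Integrable g μ) (hfg_int : Integrable (fun v => f v * g v) μ) :
    ∫ v, f v * g v ∂μ ≤ (∫ v, f v ∂μ) * ∫ v, g v ∂μ := by
  have hdiag := hfg_int.comp_fst μ
  have hdiag' := hfg_int.comp_snd μ
  have hcross := hf.mul_prod hg
  have hcross' := hg.mul_prod hf
  have key : ∫ z, f z.1 * g z.1 + f z.2 * g z.2 ∂(μ.prod μ) ≤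
      ∫ z, f z.1 * g z.2 + g z.1 * f z.2 ∂(μ.prod μ) :=
    integral_mono (hdiag.add hdiag') (hcross.add hcross') fun z => by
      linarith [hfg.mul_add_mul_le_mul_add_mul z.1 z.2]
  rw [integral_add hdiag hdiag', integral_add hcross hcross',
    integral_fun_fst (fun v => f v * g v), integral_fun_snd (fun v => f v * g v),
    integral_prod_mul f g, integral_prod_mul g f, probReal_univ, one_smul] at key
  linarith

theorem lintegral_Ioi_zero_ofReal_exp_neg_mul {r : ℝ} (hr : 0 < r) :
    ∫⁻ s in Ioi 0, ENNReal.ofReal (exp (-(r * s))) = ENNReal.ofReal r⁻¹ := by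
  have hint : IntegrableOn (fun s => exp (-r * s)) (Ioi 0) :=
    integrableOn_exp_mul_Ioi (by linarith) 0
  simp_rw [← neg_mul]
  rw [← ofReal_integral_eq_lintegral_ofReal hint (ae_of_all _ fun _ => (exp_pos _).le),
    integral_exp_mul_Ioi (by linarith), mul_zero, exp_zero, neg_div, div_neg, neg_neg, one_div]

section ScaledMixture

variable {α : Type*} [MeasurableSpace α] {ν : Measure α} [IsFiniteMeasure ν] {F : ℝ → ℝ}
  {C : ℝ≥0} {φ : α → ℝ}

theorem LipschitzWith.integrable_comp_mul (hF : LipschitzWith C F) (hφ : Integrable φ ν)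
    (x : ℝ) : Integrable (fun v => F (x * φ v)) ν := by
  refine ((integrable_const ‖F 0‖).add (hφ.norm.const_mul (C * |x|))).mono'
    (hF.continuous.comp_aestronglyMeasurable (hφ.aestronglyMeasurable.const_mul x))
    (ae_of_all _ fun v => ?_)
  have h := hF.dist_le_mul (x * φ v) 0
  rw [Real.dist_eq, Real.dist_eq, sub_zero, abs_mul] at h
  simp only [Pi.add_apply, Real.norm_eq_abs]
  linarith [abs_sub_abs_le_abs_sub (F (x * φ v)) (F 0)]

theorem LipschitzWith.hasDerivAt_integral_comp_mul {F' : ℝ → ℝ} (hF : LipschitzWith C F)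
    (hF' : ∀ t, HasDerivAt F (F' t) t) (hφ : Integrable φ ν) (x₀ : ℝ) :
    HasDerivAt (fun x => ∫ v, F (x * φ v) ∂ν) (∫ v, F' (x₀ * φ v) * φ v ∂ν) x₀ := by
  have hF'_meas : AEStronglyMeasurable (fun v => F' (x₀ * φ v) * φ v) ν := by
    rw [show F' = deriv F from funext fun t => (hF' t).deriv.symm]
    exact ((measurable_deriv F).comp_aemeasurable
      (hφ.aemeasurable.const_mul x₀)).aestronglyMeasurable.mul hφ.aestronglyMeasurable
  have hlip : ∀ᵐ v ∂ν, LipschitzOnWith (Real.nnabs (C * |φ v|)) (fun x => F (x * φ v)) univ :=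
    ae_of_all _ fun v => LipschitzWith.lipschitzOnWith <| LipschitzWith.of_dist_le_mul
      fun x y => by
        rw [Real.coe_nnabs, abs_of_nonneg (by positivity), mul_assoc]
        refine (hF.dist_le_mul _ _).trans (mul_le_mul_of_nonneg_left (le_of_eq ?_) C.2)
        rw [Real.dist_eq, Real.dist_eq, ← sub_mul, abs_mul, mul_comm]
  exact (hasDerivAt_integral_of_dominated_loc_of_lip univ_mem
    (Eventually.of_forall fun x => (hF.integrable_comp_mul hφ x).aestronglyMeasurable)
    (hF.integrable_comp_mul hφ x₀) hF'_meas hlip (hφ.norm.const_mul C)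
    (ae_of_all _ fun v => (hF' (x₀ * φ v)).comp x₀ (hasDerivAt_mul_const (φ v)))).2

end ScaledMixture

noncomputable def stopLoss (μ : Measure ℝ) (t : ℝ) : ℝ := ∫ u, max (u - t) 0 ∂μ

theorem stopLoss_nonneg (μ : Measure ℝ) (t : ℝ) : 0 ≤ stopLoss μ t :=
  integral_nonneg fun _ => le_max_right _ _

theorem hasDerivAt_max_sub_zero {u t : ℝ} (h : u ≠ t) :
    HasDerivAt (fun s => max (u - s) 0) ((Ioi t).indicator (fun _ => -1) u) t := by
  rcases h.lt_or_gt with hut | htu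
  · rw [indicator_of_notMem (notMem_Ioi.2 hut.le)]
    refine (hasDerivAt_const t (0 : ℝ)).congr_of_eventuallyEq ?_
    filter_upwards [Ioi_mem_nhds hut] with s hs
    exact max_eq_right (by linarith [mem_Ioi.1 hs])
  · rw [indicator_of_mem (mem_Ioi.2 htu)]
    refine ((hasDerivAt_id t).const_sub u).congr_of_eventuallyEq ?_
    filter_upwards [Iio_mem_nhds htu] with s hs
    exact max_eq_left (by linarith [mem_Iio.1 hs])

section StopLoss

variable {μ : Measure ℝ} [IsFiniteMeasure μ]

theorem integrable_max_sub_zero (hμ : Integrable (fun u => u) μ) (t : ℝ) :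
    Integrable (fun u => max (u - t) 0) μ :=
  (hμ.sub (integrable_const t)).pos_part

theorem ofReal_stopLoss (hμ : Integrable (fun u => u) μ) (t : ℝ) :
    ENNReal.ofReal (stopLoss μ t) = ∫⁻ s in Ioi 0, μ (Ioi (t + s)) := by
  have hnn : 0 ≤ᵐ[μ] fun u => max (u - t) 0 := ae_of_all _ fun u => le_max_right _ _
  rw [stopLoss, ofReal_integral_eq_lintegral_ofReal (integrable_max_sub_zero hμ t) hnn,
    lintegral_eq_lintegral_meas_lt μ hnn (integrable_max_sub_zero hμ t).aemeasurable]
  refine setLIntegral_congr_fun measurableSet_Ioi fun s (hs : 0 < s) => ?_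
  congr 1
  ext u
  change s < max (u - t) 0 ↔ t + s < u
  rw [lt_max_iff, or_iff_left hs.not_gt, lt_sub_iff_add_lt']

theorem hasDerivAt_stopLoss [NullSingletonClass μ] (hμ : Integrable (fun u => u) μ) (t : ℝ) :
    HasDerivAt (stopLoss μ) (-μ.real (Ioi t)) t := by
  have hlip (u : ℝ) : LipschitzWith (Real.nnabs 1) fun s => max (u - s) 0 :=
    LipschitzWith.of_dist_le_mul fun x y => by
      simpa [Real.dist_eq, abs_sub_comm] using abs_max_sub_max_le_abs (u - x) (u - y) 0
  have hderiv : ∀ᵐ u ∂μ, HasDerivAt (fun s => max (u - s) 0)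
      ((Ioi t).indicator (fun _ => -1) u) t := by
    filter_upwards [compl_mem_ae_iff.2 (measure_singleton t)] with u hu
    exact hasDerivAt_max_sub_zero hu
  have h := (hasDerivAt_integral_of_dominated_loc_of_lip univ_mem
    (Eventually.of_forall fun s => (integrable_max_sub_zero hμ s).aestronglyMeasurable)
    (integrable_max_sub_zero hμ t)
    (measurable_const.indicator measurableSet_Ioi).aestronglyMeasurable
    (ae_of_all _ fun u => (hlip u).lipschitzOnWith) (integrable_const 1) hderiv).2
  rw [integral_indicator_const _ measurableSet_Ioi, smul_neg, smul_eq_mul, mul_one] at h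
  exact h

theorem integral_prod_max_sub_eq_integral_stopLoss {ν : Measure ℝ} [IsFiniteMeasure ν]
    (hμ : Integrable (fun u => u) μ) {ψ : ℝ → ℝ} (hψ : Integrable ψ ν) :
    ∫ q : ℝ × ℝ, max (q.1 - ψ q.2) 0 ∂(μ.prod ν) = ∫ v, stopLoss μ (ψ v) ∂ν :=
  integral_prod_symm _ ((hμ.comp_fst ν).sub (hψ.comp_snd μ)).pos_part

end StopLoss

theorem lipschitzWith_stopLoss {μ : Measure ℝ} [IsProbabilityMeasure μ] [NullSingletonClass μ]
    (hμ : Integrable (fun u => u) μ) : LipschitzWith 1 (stopLoss μ) :=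
  lipschitzWith_of_nnnorm_deriv_le (fun t => (hasDerivAt_stopLoss hμ t).differentiableAt)
    fun t => by
      rw [(hasDerivAt_stopLoss hμ t).deriv, ← NNReal.coe_le_coe, coe_nnnorm, norm_neg,
        Real.norm_of_nonneg measureReal_nonneg]
      exact measureReal_le_one

section Gamma

variable {a r : ℝ}

theorem measurable_gammaPDF (a r : ℝ) : Measurable (gammaPDF a r) :=
  (measurable_gammaPDFReal a r).ennreal_ofReal

instance nullSingletonClass_gammaMeasure (a r : ℝ) : NullSingletonClass (gammaMeasure a r) :=
  inferInstanceAs (NullSingletonClass (volume.withDensity _))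

theorem integral_gammaMeasure (ha : 0 < a) (hr : 0 < r) (g : ℝ → ℝ) :
    ∫ x, g x ∂gammaMeasure a r = ∫ x, gammaPDFReal a r x * g x := by
  rw [gammaMeasure, integral_withDensity_eq_integral_toReal_smul
    (measurable_gammaPDF a r) (ae_of_all _ fun _ => ENNReal.ofReal_lt_top)]
  simp_rw [gammaPDF, ENNReal.toReal_ofReal (gammaPDFReal_nonneg ha hr _), smul_eq_mul]

theorem integrable_gammaMeasure_iff (ha : 0 < a) (hr : 0 < r) {g : ℝ → ℝ} :
    Integrable g (gammaMeasure a r) ↔ Integrable (fun x => gammaPDFReal a r x * g x) := by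
  rw [gammaMeasure, integrable_withDensity_iff_integrable_smul'
    (measurable_gammaPDF a r) (ae_of_all _ fun _ => ENNReal.ofReal_lt_top)]
  simp_rw [gammaPDF, ENNReal.toReal_ofReal (gammaPDFReal_nonneg ha hr _), smul_eq_mul]

theorem gammaPDFReal_mul_eq_gammaPDFReal_add_one (ha : 0 < a) (hr : 0 < r) (x : ℝ) :
    gammaPDFReal a r x * x = a / r * gammaPDFReal (a + 1) r x := by
  by_cases hx : 0 ≤ x
  · have hpow : x ^ a = x ^ (a - 1) * x := by
      rw [← rpow_add_one' hx (by simpa using ha.ne'), sub_add_cancel]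
    simp only [gammaPDFReal, if_pos hx, add_sub_cancel_right, Gamma_add_one ha.ne',
      rpow_add_one hr.ne', hpow]
    field_simp
  · simp [gammaPDFReal, hx]

theorem integrable_id_gammaMeasure (ha : 0 < a) (hr : 0 < r) :
    Integrable (fun x => x) (gammaMeasure a r) := by
  have := isProbabilityMeasure_gammaMeasure (a := a + 1) (by linarith) hr
  have h1 := (integrable_gammaMeasure_iff (a := a + 1) (by linarith) hr).1
    (integrable_const (1 : ℝ))
  rw [integrable_gammaMeasure_iff ha hr]
  simp_rw [gammaPDFReal_mul_eq_gammaPDFReal_add_one ha hr]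
  simpa using h1.const_mul (a / r)

theorem integral_id_gammaMeasure (ha : 0 < a) (hr : 0 < r) :
    ∫ x, x ∂gammaMeasure a r = a / r := by
  have := isProbabilityMeasure_gammaMeasure (a := a + 1) (by linarith) hr
  have h1 := integral_gammaMeasure (a := a + 1) (by linarith) hr fun _ => 1
  simp only [integral_const, probReal_univ, smul_eq_mul, mul_one] at h1
  simp_rw [integral_gammaMeasure ha hr, gammaPDFReal_mul_eq_gammaPDFReal_add_one ha hr]
  rw [integral_const_mul, ← h1, mul_one]

theorem exp_mul_gammaPDFReal_le_gammaPDFReal_add (ha : 1 ≤ a) (hr : 0 < r) {s : ℝ}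
    (hs : 0 ≤ s) (w : ℝ) : exp (-(r * s)) * gammaPDFReal a r w ≤ gammaPDFReal a r (w + s) := by
  by_cases hw : 0 ≤ w
  · have hexp : exp (-(r * (w + s))) = exp (-(r * s)) * exp (-(r * w)) := by
      rw [← exp_add]; ring_nf
    simp only [gammaPDFReal, if_pos hw, if_pos (add_nonneg hw hs), hexp]
    have := Gamma_pos_of_pos (by linarith : 0 < a)
    calc _ = r ^ a / Gamma a * w ^ (a - 1) * (exp (-(r * s)) * exp (-(r * w))) := by ring
      _ ≤ _ := by gcongr; linarith
  · simp only [gammaPDFReal, if_neg hw, mul_zero]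
    exact gammaPDFReal_nonneg (by linarith) hr _

theorem ofReal_exp_mul_gammaMeasure_Ioi_le (ha : 1 ≤ a) (hr : 0 < r) {s : ℝ} (hs : 0 ≤ s)
    (t : ℝ) : ENNReal.ofReal (exp (-(r * s))) * gammaMeasure a r (Ioi t) ≤
      gammaMeasure a r (Ioi (t + s)) := by
  have hshift : ∫⁻ u in Ioi (t + s), gammaPDF a r u = ∫⁻ u in Ioi t, gammaPDF a r (u + s) := by
    rw [← (measurePreserving_add_right volume s).setLIntegral_comp_preimage measurableSet_Ioi
      (measurable_gammaPDF a r), preimage_add_const_Ioi, add_sub_cancel_right]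
  rw [gammaMeasure, withDensity_apply _ measurableSet_Ioi, withDensity_apply _ measurableSet_Ioi,
    hshift, ← lintegral_const_mul _ (measurable_gammaPDF a r)]
  refine lintegral_mono fun u => ?_
  rw [gammaPDF, gammaPDF, ← ENNReal.ofReal_mul (exp_pos _).le]
  exact ENNReal.ofReal_le_ofReal (exp_mul_gammaPDFReal_le_gammaPDFReal_add ha hr hs u)

theorem measureReal_Ioi_div_le_stopLoss_gammaMeasure (ha : 1 ≤ a) (hr : 0 < r) (t : ℝ) :
    (gammaMeasure a r).real (Ioi t) / r ≤ stopLoss (gammaMeasure a r) t := by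
  have := isProbabilityMeasure_gammaMeasure (a := a) (by linarith) hr
  rw [← ENNReal.ofReal_le_ofReal_iff (stopLoss_nonneg _ _),
    ofReal_stopLoss (integrable_id_gammaMeasure (by linarith) hr), div_eq_inv_mul,
    ENNReal.ofReal_mul (by positivity), ofReal_measureReal,
    ← lintegral_Ioi_zero_ofReal_exp_neg_mul hr, ← lintegral_mul_const _ (by fun_prop)]
  exact setLIntegral_mono' measurableSet_Ioi fun s hs =>
    ofReal_exp_mul_gammaMeasure_Ioi_le ha hr (le_of_lt hs) t

end Gamma

section Exponential

variable {r : ℝ}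

theorem expMeasure_Ioi (hr : 0 < r) {t : ℝ} (ht : 0 ≤ t) :
    expMeasure r (Ioi t) = ENNReal.ofReal (exp (-(r * t))) := by
  have := isProbabilityMeasure_expMeasure hr
  rw [← compl_Iic, prob_compl_eq_one_sub measurableSet_Iic, ← ofReal_cdf, cdf_expMeasure_eq hr,
    if_pos ht, ENNReal.ofReal_sub _ (exp_pos _).le, ENNReal.ofReal_one,
    ENNReal.sub_sub_cancel ENNReal.one_ne_top]
  exact ENNReal.ofReal_le_one.2 (exp_le_one_iff.2 (by nlinarith))

theorem stopLoss_expMeasure (hr : 0 < r) {t : ℝ} (ht : 0 ≤ t) :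
    stopLoss (expMeasure r) t = exp (-(r * t)) / r := by
  have := isProbabilityMeasure_expMeasure hr
  refine (ENNReal.ofReal_eq_ofReal_iff (stopLoss_nonneg _ _) (by positivity)).1 ?_
  rw [ofReal_stopLoss (μ := expMeasure r) (integrable_id_gammaMeasure one_pos hr),
    div_eq_mul_inv, ENNReal.ofReal_mul (exp_pos _).le, ← lintegral_Ioi_zero_ofReal_exp_neg_mul hr,
    ← lintegral_const_mul _ (by fun_prop)]
  refine setLIntegral_congr_fun measurableSet_Ioi fun s (hs : 0 < s) => ?_
  rw [expMeasure_Ioi hr (by linarith), ← ENNReal.ofReal_mul (exp_pos _).le, ← exp_add]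
  ring_nf

end Exponential

section GammaMixture

variable {α : Type*} [MeasurableSpace α] {ν : Measure α} [IsProbabilityMeasure ν] {a r : ℝ}
  {φ : α → ℝ}

theorem integral_measureReal_Ioi_mul_le_mul_integral_stopLoss (ha : 1 ≤ a) (hr : 0 < r)
    (hφ : Integrable φ ν) (hφ1 : ∫ v, φ v ∂ν = 1) {x : ℝ} (hx : 0 ≤ x) :
    ∫ v, (gammaMeasure a r).real (Ioi (x * φ v)) * φ v ∂ν ≤
      r * ∫ v, stopLoss (gammaMeasure a r) (x * φ v) ∂ν := by
  have := isProbabilityMeasure_gammaMeasure (a := a) (by linarith) hr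
  have hγ : Integrable (fun u => u) (gammaMeasure a r) :=
    integrable_id_gammaMeasure (by linarith) hr
  set T : ℝ → ℝ := fun t => (gammaMeasure a r).real (Ioi t)
  have hT : Antitone T := fun s t hst => measureReal_mono (Ioi_subset_Ioi hst)
  have hTm : AEStronglyMeasurable (fun v => T (x * φ v)) ν :=
    (hT.measurable.comp_aemeasurable (hφ.aemeasurable.const_mul x)).aestronglyMeasurable
  have hTbdd : ∀ᵐ v ∂ν, ‖T (x * φ v)‖ ≤ 1 := ae_of_all _ fun v => by
    rw [Real.norm_of_nonneg measureReal_nonneg]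
    exact measureReal_le_one
  have hTint : Integrable (fun v => T (x * φ v)) ν := (integrable_const 1).mono' hTm hTbdd
  have hanti : Antivary (fun v => T (x * φ v)) φ := fun i j hij =>
    hT (mul_le_mul_of_nonneg_left hij.le hx)
  calc ∫ v, T (x * φ v) * φ v ∂ν ≤ (∫ v, T (x * φ v) ∂ν) * ∫ v, φ v ∂ν :=
        integral_mul_le_integral_mul_integral_of_antivary hanti hTint hφ (hφ.bdd_mul hTm hTbdd)
    _ ≤ ∫ v, r * stopLoss (gammaMeasure a r) (x * φ v) ∂ν := by
        rw [hφ1, mul_one]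
        refine integral_mono hTint
          (((lipschitzWith_stopLoss hγ).integrable_comp_mul hφ x).const_mul r) fun v => ?_
        exact (div_le_iff₀' hr).1 (measureReal_Ioi_div_le_stopLoss_gammaMeasure ha hr _)
    _ = r * ∫ v, stopLoss (gammaMeasure a r) (x * φ v) ∂ν := integral_const_mul _ _

theorem monotoneOn_integral_stopLoss_div_stopLoss_expMeasure (ha : 1 ≤ a) (hr : 0 < r)
    (hφ : Integrable φ ν) (hφ1 : ∫ v, φ v ∂ν = 1) :
    MonotoneOn (fun x => (∫ v, stopLoss (gammaMeasure a r) (x * φ v) ∂ν) /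
      stopLoss (expMeasure r) x) (Ici 0) := by
  have := isProbabilityMeasure_gammaMeasure (a := a) (by linarith) hr
  have hγ : Integrable (fun u => u) (gammaMeasure a r) :=
    integrable_id_gammaMeasure (by linarith) hr
  set M : ℝ → ℝ := fun x => ∫ v, stopLoss (gammaMeasure a r) (x * φ v) ∂ν
  have hM (x : ℝ) : HasDerivAt M (∫ v, -(gammaMeasure a r).real (Ioi (x * φ v)) * φ v ∂ν) x :=
    (lipschitzWith_stopLoss hγ).hasDerivAt_integral_comp_mul (hasDerivAt_stopLoss hγ) hφ x
  have hg (x : ℝ) := (((hasDerivAt_id x).const_mul r).exp.mul (hM x)).const_mul r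
  refine (monotoneOn_of_hasDerivWithinAt_nonneg (convex_Ici 0)
    (fun x _ => (hg x).continuousAt.continuousWithinAt) (fun x _ => (hg x).hasDerivWithinAt)
    fun x hx => ?_).congr fun x (hx : 0 ≤ x) => ?_
  · rw [interior_Ici] at hx
    have key := integral_measureReal_Ioi_mul_le_mul_integral_stopLoss ha hr hφ hφ1 hx.le
    simp only [id, mul_one, neg_mul, integral_neg]
    rw [show ∀ e m i : ℝ, r * (e * r * m + e * -i) = r * e * (r * m - i) by intros; ring]
    exact mul_nonneg (by positivity) (sub_nonneg.2 key)
  · simp only [stopLoss_expMeasure hr hx, Pi.mul_apply, id, exp_neg]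
    field_simp
    rfl

end GammaMixture

section ChiSquared

variable {k : ℕ}

theorem isProbabilityMeasure_chiSqMeasure (hk : 0 < k) :
    IsProbabilityMeasure (chiSqMeasure k) :=
  isProbabilityMeasure_gammaMeasure (by positivity) one_half_pos

theorem integrable_id_chiSqMeasure (hk : 0 < k) : Integrable (fun u => u) (chiSqMeasure k) :=
  integrable_id_gammaMeasure (by positivity) one_half_pos

theorem integral_id_chiSqMeasure (hk : 0 < k) : ∫ u, u ∂chiSqMeasure k = k := by
  rw [chiSqMeasure, integral_id_gammaMeasure (by positivity) one_half_pos]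
  ring

theorem chiSqMeasure_two : chiSqMeasure 2 = expMeasure (1 / 2) := by
  norm_num [chiSqMeasure, expMeasure]

end ChiSquared

theorem ratio_monotone (d N : ℕ) (hd : 2 ≤ d) (hN : 0 < N) :
    MonotoneOn
      (fun x : ℝ =>
        (∫ q : ℝ × ℝ, max (q.1 - x * q.2 / N) 0
            ∂((chiSqMeasure d).prod (chiSqMeasure N))) /
          ∫ y, max (y - x) 0 ∂(chiSqMeasure 2))
      (Set.Ici (d : ℝ)) := by
  have := isProbabilityMeasure_chiSqMeasure (k := d) (by omega)
  have := isProbabilityMeasure_chiSqMeasure hN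
  have hd' : (1 : ℝ) ≤ d / 2 := by rw [le_div_iff₀ two_pos, one_mul]; exact_mod_cast hd
  have hφ1 : ∫ v, v / N ∂chiSqMeasure N = 1 := by
    rw [integral_div, integral_id_chiSqMeasure hN, div_self (by positivity)]
  refine ((monotoneOn_integral_stopLoss_div_stopLoss_expMeasure hd' one_half_pos
    ((integrable_id_chiSqMeasure hN).div_const N) hφ1).mono
    (Ici_subset_Ici.2 (Nat.cast_nonneg d))).congr fun x _ => ?_
  rw [integral_prod_max_sub_eq_integral_stopLoss (integrable_id_chiSqMeasure (by omega))
    (((integrable_id_chiSqMeasure hN).const_mul x).div_const N), chiSqMeasure_two]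
  simp only [mul_div_assoc]
  rfl
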